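/- arXiv:2605.31585 — 3 statements merged into one kernel-verified Lean document; each statement's English description precedes it below -/
import Mathlib

section
/- Let J = (J₀, J₁, J₂, J₃) ∈ ℝ⁴, K = (K₂, K₃) ∈ ℝ², P = (P₀, P₁) ∈ ℝ², Q = (Q₀, Q₁) ∈ ℝ², and q ∈ [0,1] with J₀² - J₁² - J₂² - J₃² ≥ 0. Define E₀(X₀,X₁) = (X₀² + X₁²)/2, E₁(X₀,X₁) = X₀X₁, M⁰⁰ = E₀(J₀,J₁) + E₀(P) + E₀(Q) + E₀(J₂,J₃) + E₀(K₂,K₃) + (q/2)(J₀² - J₁² - J₂² - J₃²), M⁰¹ = -E₁(P) - E₁(Q) - E₁(J₀,J₁), and M¹¹ = E₀(J₀,J₁) + E₀(P) + E₀(Q) - E₀(J₂,J₃) - E₀(K₂,K₃) - (q/2)(J₀² - J₁² - J₂² - J₃²). Then M⁰⁰ ≥ 0, 2|M⁰¹| ≤ M⁰⁰ + M¹¹, and -E₀(K₂,K₃) ≤ M¹¹ ≤ M⁰⁰. -/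
/-- The basic quadratic form `E₀(X₀,X₁) = (X₀² + X₁²)/2`. -/
noncomputable def E0 (X0 X1 : ℝ) : ℝ := (X0 ^ 2 + X1 ^ 2) / 2

/-- The basic quadratic form `E₁(X₀,X₁) = X₀X₁`. -/
noncomputable def E1 (X0 X1 : ℝ) : ℝ := X0 * X1

/-- Inequalities for the total energy-momentum coefficients
`M⁰⁰, M⁰¹, M¹¹` of the T²-symmetric Einstein–Euler system. -/
theorem stmt_1 (J0 J1 J2 J3 K2 K3 P0 P1 Q0 Q1 q M00 M01 M11 : ℝ)
    (hq0 : 0 ≤ q) (hq1 : q ≤ 1)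
    (hcausal : 0 ≤ J0 ^ 2 - J1 ^ 2 - J2 ^ 2 - J3 ^ 2)
    (hM00 : M00 = E0 J0 J1 + E0 P0 P1 + E0 Q0 Q1 + E0 J2 J3 + E0 K2 K3
      + q / 2 * (J0 ^ 2 - J1 ^ 2 - J2 ^ 2 - J3 ^ 2))
    (hM01 : M01 = -E1 P0 P1 - E1 Q0 Q1 - E1 J0 J1)
    (hM11 : M11 = E0 J0 J1 + E0 P0 P1 + E0 Q0 Q1 - E0 J2 J3 - E0 K2 K3
      - q / 2 * (J0 ^ 2 - J1 ^ 2 - J2 ^ 2 - J3 ^ 2)) :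
    0 ≤ M00 ∧ 2 * |M01| ≤ M00 + M11 ∧ -E0 K2 K3 ≤ M11 ∧ M11 ≤ M00 := by
  subst hM00 hM01 hM11
  simp only [E0, E1]
  refine ⟨by positivity, ?_, ?_, ?_⟩
  · rcases abs_cases (-(P0 * P1) - Q0 * Q1 - J0 * J1) with ⟨h, _⟩ | ⟨h, _⟩ <;>
      rw [h] <;> nlinarith [sq_nonneg (P0 + P1), sq_nonneg (P0 - P1),
        sq_nonneg (Q0 + Q1), sq_nonneg (Q0 - Q1), sq_nonneg (J0 + J1), sq_nonneg (J0 - J1)]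
  · nlinarith [sq_nonneg J1, sq_nonneg P0, sq_nonneg P1, sq_nonneg Q0, sq_nonneg Q1,
      mul_nonneg (sub_nonneg.mpr hq1) hcausal]
  · nlinarith [mul_nonneg hq0 hcausal, sq_nonneg J2, sq_nonneg J3, sq_nonneg K2, sq_nonneg K3]
end

section
/- With the setup of the energy-momentum coefficients (J causal, q ∈ [0,1]), define the source term S := E₀(J₂,J₃) + 5·E₀(K₂,K₃) - (P₀² - P₁²) - (Q₀² - Q₁²) - (J₀² - J₁²) - (q/2)(J₀² - J₁² - J₂² - J₃²). Then |S| ≤ 5·M⁰⁰, where M⁰⁰ = E₀(J₀,J₁) + E₀(P₀,P₁) + E₀(Q₀,Q₁) + E₀(J₂,J₃) + E₀(K₂,K₃) + (q/2)(J₀² - J₁² - J₂² - J₃²). -/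
/-- The source term of the energy-balance Euler equation is
bounded by five times the energy density: `|S| ≤ 5 M⁰⁰`. -/
theorem stmt_2 (J0 J1 J2 J3 K2 K3 P0 P1 Q0 Q1 q S M00 : ℝ)
    (hq0 : 0 ≤ q) (hq1 : q ≤ 1)
    (hcausal : 0 ≤ J0 ^ 2 - J1 ^ 2 - J2 ^ 2 - J3 ^ 2)
    (hS : S = E0 J2 J3 + 5 * E0 K2 K3 - (P0 ^ 2 - P1 ^ 2) - (Q0 ^ 2 - Q1 ^ 2)
      - (J0 ^ 2 - J1 ^ 2) - q / 2 * (J0 ^ 2 - J1 ^ 2 - J2 ^ 2 - J3 ^ 2))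
    (hM00 : M00 = E0 J0 J1 + E0 P0 P1 + E0 Q0 Q1 + E0 J2 J3 + E0 K2 K3
      + q / 2 * (J0 ^ 2 - J1 ^ 2 - J2 ^ 2 - J3 ^ 2)) :
    |S| ≤ 5 * M00 := by
  rw [abs_le]
  simp only [E0] at hS hM00
  constructor <;> nlinarith [sq_nonneg J0, sq_nonneg J1, sq_nonneg J2, sq_nonneg J3,
    sq_nonneg K2, sq_nonneg K3, sq_nonneg P0, sq_nonneg P1, sq_nonneg Q0, sq_nonneg Q1,
    mul_nonneg hq0 hcausal]
end

section
/- Let Ĥ : (0,∞) → (0,∞) be strictly increasing with Ĥ(y) → 0 as y → 0⁺ and y·Ĥ(y)² → ∞ as y → ∞, and let ρ > 0. Define φ_ρ(y) := Ĥ(y)^{-2}ρ²·(Ĥ(y)^{-2}ρ² − y) on the interval (0, y_ρ), where y_ρ is the unique solution of y_ρ·Ĥ(y_ρ)² = ρ². Then φ_ρ is a strictly decreasing bijection from (0, y_ρ) onto (0, ∞), so that for every Z ≥ 0 there exists a unique y ∈ (0, y_ρ) with φ_ρ(y) = Z. (Assume additionally that Ĥ is differentiable with d(log Ĥ)/dy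 > 0 and that φ_ρ(y) → ∞ as y → 0⁺.) -/
/-!
Write `g y = ρ² / Ĥ(y)²`, so that `φ_ρ(y) = g(y) (g(y) - y)`. Since `Ĥ` is positive and strictly
increasing, `g` is strictly decreasing and `y Ĥ(y)²` is strictly increasing; the latter gives
`y ≤ g(y)` on `(0, y_ρ]`, with equality at `y_ρ`. Hence `φ_ρ` is a product of two nonnegative
strictly decreasing factors on `(0, y_ρ]`, so it is strictly decreasing with `φ_ρ(y_ρ) = 0`.
Since `φ_ρ` is continuous and blows up at `0⁺`, the intermediate value theorem shows that it
attains every positive value on `(0, y_ρ)`.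
-/

open Set Filter Topology

theorem Set.BijOn.existsUnique_mem_eq {α β : Type*} {f : α → β} {s : Set α} {t : Set β}
    (hf : BijOn f s t) {z : β} (hz : z ∈ t) : ∃! y, y ∈ s ∧ f y = z := by
  obtain ⟨y, hy, rfl⟩ := hf.surjOn hz
  exact ⟨y, ⟨hy, rfl⟩, fun y' hy' => hf.injOn hy'.1 hy hy'.2⟩

theorem surjOn_Ioo_Ioi_of_tendsto_atTop {α δ : Type*} [ConditionallyCompleteLinearOrder α]
    [TopologicalSpace α] [OrderTopology α] [DenselyOrdered α]
    [LinearOrder δ] [NoMaxOrder δ] [TopologicalSpace δ] [OrderClosedTopology δ]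
    {f : α → δ} {a b : α} (hab : a < b) (hf : ContinuousOn f (Ioc a b))
    (hlim : Tendsto f (𝓝[>] a) atTop) : SurjOn f (Ioo a b) (Ioi (f b)) := by
  intro z hz
  have := nhdsGT_neBot_of_exists_gt ⟨b, hab⟩
  obtain ⟨c, hzc, hac, hcb⟩ :=
    ((hlim.eventually_gt_atTop z).and (Ioo_mem_nhdsGT hab)).exists
  obtain ⟨y, ⟨hcy, hyb⟩, rfl⟩ :=
    intermediate_value_Ico' hcb.le (hf.mono (Icc_subset_Ioc_iff hcb.le |>.2 ⟨hac, le_rfl⟩))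
      ⟨hz, hzc.le⟩
  exact ⟨y, ⟨hac.trans_le hcy, hyb⟩, rfl⟩

section OrderedField

variable {𝕜 : Type*} [Field 𝕜] [LinearOrder 𝕜] [IsStrictOrderedRing 𝕜] {s : Set 𝕜}

theorem StrictAntiOn.mul_sub_self {g : 𝕜 → 𝕜} (hg : StrictAntiOn g s) (hs : s ⊆ Ici 0)
    (hle : ∀ y ∈ s, y ≤ g y) : StrictAntiOn (fun y => g y * (g y - y)) s := by
  intro a ha b hb hab
  have hb0 : 0 ≤ b := hs hb
  have hgb := hle b hb
  have hgab := hg ha hb hab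
  exact mul_lt_mul'' hgab (by linarith) (by linarith) (by linarith)

variable {H : 𝕜 → 𝕜}

theorem StrictMonoOn.strictAntiOn_inv_sq_mul (hH : StrictMonoOn H s) (hpos : ∀ y ∈ s, 0 < H y)
    {c : 𝕜} (hc : 0 < c) : StrictAntiOn (fun y => (H y)⁻¹ ^ 2 * c) s := by
  intro a ha b hb hab
  have := hpos a ha
  have := hpos b hb
  have := hH ha hb hab
  dsimp only
  gcongr

theorem StrictMonoOn.mul_sq_self (hH : StrictMonoOn H s) (hpos : ∀ y ∈ s, 0 < H y)
    (hs : s ⊆ Ici 0) : StrictMonoOn (fun y => y * H y ^ 2) s := by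
  intro a ha b hb hab
  have := hpos a ha
  have := hH ha hb hab
  have : 0 ≤ a := hs ha
  dsimp only
  gcongr

end OrderedField

theorem stmt_18_general (H H' φ : ℝ → ℝ) (ρ yρ : ℝ)
    (hρ : 0 < ρ)
    (hHpos : ∀ y : ℝ, 0 < y → 0 < H y)
    (hHmono : StrictMonoOn H (Set.Ioi 0))
    (hH' : ∀ y : ℝ, 0 < y → HasDerivAt H (H' y) y)
    (hyρ : 0 < yρ) (hyρeq : yρ * H yρ ^ 2 = ρ ^ 2)
    (hφ : ∀ y : ℝ, φ y = (H y)⁻¹ ^ 2 * ρ ^ 2 * ((H y)⁻¹ ^ 2 * ρ ^ 2 - y))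
    (hφ0 : Filter.Tendsto φ (nhdsWithin 0 (Set.Ioi 0)) Filter.atTop) :
    StrictAntiOn φ (Set.Ioo 0 yρ) ∧
    Set.BijOn φ (Set.Ioo 0 yρ) (Set.Ioi 0) ∧
    ∀ Z : ℝ, 0 < Z → ∃! y, y ∈ Set.Ioo 0 yρ ∧ φ y = Z := by
  set g : ℝ → ℝ := fun y => (H y)⁻¹ ^ 2 * ρ ^ 2
  have hφg : φ = fun y => g y * (g y - y) := funext hφ
  have hle : ∀ y ∈ Ioc 0 yρ, y ≤ g y := fun y hy => by
    have hHy := hHpos y hy.1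
    have hmul : y * H y ^ 2 ≤ ρ ^ 2 :=
      hyρeq ▸ (hHmono.mul_sq_self hHpos Ioi_subset_Ici_self).monotoneOn hy.1 hyρ hy.2
    calc y = y * H y ^ 2 * (H y)⁻¹ ^ 2 := by field_simp
      _ ≤ ρ ^ 2 * (H y)⁻¹ ^ 2 := by gcongr
      _ = g y := mul_comm _ _
  have hanti : StrictAntiOn φ (Ioc 0 yρ) := hφg ▸
    ((hHmono.strictAntiOn_inv_sq_mul hHpos (pow_pos hρ 2)).mono Ioc_subset_Ioi_self).mul_sub_self
      (fun y hy => hy.1.le) hle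
  have hφyρ : φ yρ = 0 := by
    have hgyρ : g yρ = yρ := by
      simp only [g, ← hyρeq]
      field_simp [(hHpos yρ hyρ).ne']
    simp only [hφg, hgyρ, sub_self, mul_zero]
  have hcont : ContinuousOn φ (Ioc 0 yρ) := fun y hy => by
    have := (hH' y hy.1).continuousAt
    have := (hHpos y hy.1).ne'
    rw [hφg]
    exact ContinuousAt.continuousWithinAt (by fun_prop (disch := assumption))
  have hbij : BijOn φ (Ioo 0 yρ) (Ioi 0) :=
    ⟨fun y hy => hφyρ ▸ hanti (Ioo_subset_Ioc_self hy) ⟨hyρ, le_rfl⟩ hy.2,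
      (hanti.mono Ioo_subset_Ioc_self).injOn,
      by simpa only [hφyρ] using surjOn_Ioo_Ioi_of_tendsto_atTop hyρ hcont hφ0⟩
  exact ⟨hanti.mono Ioo_subset_Ioc_self, hbij, fun _ hZ => hbij.existsUnique_mem_eq hZ⟩

/-- the function `φ_ρ(y) = Ĥ(y)^{-2}ρ²(Ĥ(y)^{-2}ρ² - y)` is a
strictly decreasing bijection from `(0, y_ρ)` onto `(0, ∞)`, where `y_ρ` solves
`y_ρ·Ĥ(y_ρ)² = ρ²`; hence every positive value `Z` is attained at a unique
`y ∈ (0, y_ρ)`. -/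
theorem stmt_18 (H H' φ : ℝ → ℝ) (ρ yρ : ℝ)
    (hρ : 0 < ρ)
    (hHpos : ∀ y : ℝ, 0 < y → 0 < H y)
    (hHmono : StrictMonoOn H (Set.Ioi 0))
    (hH0 : Filter.Tendsto H (nhdsWithin 0 (Set.Ioi 0)) (nhds 0))
    (hHinf : Filter.Tendsto (fun y => y * H y ^ 2) Filter.atTop Filter.atTop)
    (hH' : ∀ y : ℝ, 0 < y → HasDerivAt H (H' y) y)
    (hH'pos : ∀ y : ℝ, 0 < y → 0 < H' y / H y)
    (hyρ : 0 < yρ) (hyρeq : yρ * H yρ ^ 2 = ρ ^ 2)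
    (hφ : ∀ y : ℝ, φ y = (H y)⁻¹ ^ 2 * ρ ^ 2 * ((H y)⁻¹ ^ 2 * ρ ^ 2 - y))
    (hφ0 : Filter.Tendsto φ (nhdsWithin 0 (Set.Ioi 0)) Filter.atTop) :
    StrictAntiOn φ (Set.Ioo 0 yρ) ∧
    Set.BijOn φ (Set.Ioo 0 yρ) (Set.Ioi 0) ∧
    ∀ Z : ℝ, 0 < Z → ∃! y, y ∈ Set.Ioo 0 yρ ∧ φ y = Z :=
  stmt_18_general H H' φ ρ yρ hρ hHpos hHmono hH' hyρ hyρeq hφ hφ0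
end
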